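/- For every Λ₀-path p, the sequence (t_0, t_1, ..., t_{k*-1}) produced by the highest-lift construction is weakly decreasing, hence defines a valid conjugate partition, and the resulting partition λ(p) is n-regular. -/
import Mathlib


/-- A `Λ₀`-path: a sequence `γ : ℕ → {0,…,n-1}` with `γ k = k % n` for all large `k`. -/
def PathSet (n : ℕ) : Set (ℕ → ℕ) :=
  {γ | (∀ k, γ k < n) ∧ ∃ K, ∀ k, K ≤ k → γ k = k % n}

/-- The length of a path: the minimal `K` with `γ k = k % n` for all `k ≥ K`. -/
noncomputable def plen (n : ℕ) (γ : ℕ → ℕ) : ℕ :=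
  sInf {K | ∀ k, K ≤ k → γ k = k % n}

/-- The sequence `t_k` of the highest-lift construction: `t_k = 0` for `k ≥ k*`, and,
recursively downwards, `t_k ≡ k - γ k (mod n)` with `0 ≤ t_k - t_{k+1} < n`. -/
def tseq (n : ℕ) (γ : ℕ → ℕ) (kstar : ℕ) (k : ℕ) : ℤ :=
  if h : kstar ≤ k then 0
  else tseq n γ kstar (k + 1) + (((k : ℤ) - γ k - tseq n γ kstar (k + 1)) % n)
termination_by kstar - k
decreasing_by omega

/-- The highest-lift partition of a path, given as the (weakly decreasing) sequence of
its parts: part number `j+1` is the number of `k` with `t_k ≥ j+1`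
(i.e. the partition whose conjugate is `(t_0, t_1, …, t_{k*-1})`). -/
noncomputable def highestLift (n : ℕ) (γ : ℕ → ℕ) : ℕ → ℕ :=
  fun j => {k : ℕ | (j : ℤ) + 1 ≤ tseq n γ (plen n γ) k}.ncard

/-- A partition, given as a weakly decreasing sequence of parts (extended by zeros). -/
def IsPartitionFun (f : ℕ → ℕ) : Prop :=
  (∀ i j : ℕ, i ≤ j → f j ≤ f i) ∧ ∃ N, ∀ i, N ≤ i → f i = 0

/-- The set of `n`-regular partitions: no part value `v ≥ 1` occurs `n` or more times. -/
def RegularSet (n : ℕ) : Set (ℕ → ℕ) :=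
  {f | IsPartitionFun f ∧ ∀ v : ℕ, 1 ≤ v → {j : ℕ | f j = v}.ncard < n}

lemma tseq_eq_zero {n : ℕ} {γ : ℕ → ℕ} {K k : ℕ} (h : K ≤ k) :
    tseq n γ K k = 0 := by rw [tseq, dif_pos h]

lemma tseq_nonneg (n : ℕ) (hn : 0 < n) (γ : ℕ → ℕ) (K k : ℕ) :
    0 ≤ tseq n γ K k := by
  by_cases h : K ≤ k
  · rw [tseq_eq_zero h]
  · rw [tseq, dif_neg h]
    have h1 := tseq_nonneg n hn γ K (k+1)
    have h2 : 0 ≤ ((k:ℤ) - γ k - tseq n γ K (k+1)) % n :=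
      Int.emod_nonneg _ (by exact_mod_cast hn.ne')
    linarith
termination_by K - k
decreasing_by omega

lemma tseq_step (n : ℕ) (hn : 0 < n) (γ : ℕ → ℕ) (K k : ℕ) :
    tseq n γ K (k+1) ≤ tseq n γ K k ∧ tseq n γ K k - tseq n γ K (k+1) < n := by
  by_cases h : K ≤ k
  · rw [tseq_eq_zero h, tseq_eq_zero (le_trans h (Nat.le_succ k))]
    refine ⟨le_rfl, by omega⟩
  · have he : tseq n γ K k =
        tseq n γ K (k+1) + (((k:ℤ) - γ k - tseq n γ K (k+1)) % n) := by
      rw [tseq, dif_neg h]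
    rw [he]
    have h2 : 0 ≤ ((k:ℤ) - γ k - tseq n γ K (k+1)) % n :=
      Int.emod_nonneg _ (by exact_mod_cast hn.ne')
    have h3 : ((k:ℤ) - γ k - tseq n γ K (k+1)) % n < n :=
      Int.emod_lt_of_pos _ (by exact_mod_cast hn)
    constructor <;> linarith

lemma tseq_anti (n : ℕ) (hn : 0 < n) (γ : ℕ → ℕ) (K : ℕ) :
    ∀ i j : ℕ, i ≤ j → tseq n γ K j ≤ tseq n γ K i := by
  intro i j hij
  induction j, hij using Nat.le_induction with
  | base => exact le_rfl
  | succ m hm ih => exact le_trans (tseq_step n hn γ K m).1 ih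

/-- For every `Λ₀`-path, the sequence `(t_0, t_1, …)` is nonnegative and weakly
decreasing (hence is a valid conjugate partition), with successive differences
`< n`; consequently the highest-lift partition is `n`-regular. -/
theorem stmt4 (n : ℕ) (hn : 2 ≤ n) (γ : ℕ → ℕ) (hγ : γ ∈ PathSet n) :
    (∀ k : ℕ, 0 ≤ tseq n γ (plen n γ) k ∧
      tseq n γ (plen n γ) (k + 1) ≤ tseq n γ (plen n γ) k ∧
      tseq n γ (plen n γ) k - tseq n γ (plen n γ) (k + 1) < n) ∧
    highestLift n γ ∈ RegularSet n := by
  have hn0 : 0 < n := by omega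
  set K := plen n γ with hK
  set t : ℕ → ℤ := tseq n γ K with ht
  have hanti : ∀ i j : ℕ, i ≤ j → t j ≤ t i := tseq_anti n hn0 γ K
  have hnn : ∀ k, 0 ≤ t k := tseq_nonneg n hn0 γ K
  have hstep : ∀ k, t (k+1) ≤ t k ∧ t k - t (k+1) < (n:ℤ) := tseq_step n hn0 γ K
  set m : ℕ → ℕ := fun j => sInf {k : ℕ | t k ≤ (j:ℤ)} with hm
  have hSne : ∀ j : ℕ, ({k : ℕ | t k ≤ (j:ℤ)}).Nonempty := fun j =>
    ⟨K, by simp [ht, tseq_eq_zero (le_refl K)]⟩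
  have hm_mem : ∀ j : ℕ, t (m j) ≤ (j:ℤ) := fun j => Nat.sInf_mem (hSne j)
  have hm_le : ∀ j k : ℕ, t k ≤ (j:ℤ) → m j ≤ k := fun j k h => Nat.sInf_le h
  have key : ∀ j k : ℕ, ((j:ℤ) + 1 ≤ t k ↔ k < m j) := by
    intro j k
    constructor
    · intro h
      by_contra hc
      push_neg at hc
      have h2 := le_trans (hanti _ _ hc) (hm_mem j)
      omega
    · intro h
      have h2 : k ∉ {k : ℕ | t k ≤ (j:ℤ)} := Nat.notMem_of_lt_sInf h
      simp only [Set.mem_setOf_eq, not_le] at h2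
      omega
  have hf : ∀ j : ℕ, highestLift n γ j = m j := by
    intro j
    have hset : {k : ℕ | (j:ℤ) + 1 ≤ tseq n γ (plen n γ) k} = Set.Iio (m j) := by
      ext k; simpa using key j k
    rw [highestLift, hset, show Set.Iio (m j) = ↑(Finset.Iio (m j)) by simp,
      Set.ncard_coe_finset, Nat.card_Iio]
  have hmv : ∀ j v : ℕ, (m j ≤ v ↔ t v ≤ (j:ℤ)) := by
    intro j v
    constructor
    · intro h; exact le_trans (hanti _ _ h) (hm_mem j)
    · intro h; exact hm_le j v h
  refine ⟨fun k => ⟨hnn k, (hstep k).1, (hstep k).2⟩, ⟨⟨?_, ?_⟩, ?_⟩⟩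
  · intro i j hij
    rw [hf, hf]
    exact hm_le j (m i) (le_trans (hm_mem i) (by exact_mod_cast hij))
  · refine ⟨(t 0).toNat, fun i hi => ?_⟩
    rw [hf]
    have h1 : t 0 ≤ (i:ℤ) := le_trans (Int.self_le_toNat _) (by exact_mod_cast hi)
    exact Nat.eq_zero_of_le_zero (hm_le i 0 h1)
  · intro v hv
    obtain ⟨w, rfl⟩ : ∃ w, v = w + 1 := ⟨v - 1, by omega⟩
    have hset : {j : ℕ | highestLift n γ j = w + 1} =
        ↑(Finset.Ico (t (w+1)).toNat (t w).toNat) := by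
      ext j
      simp only [Set.mem_setOf_eq, Finset.coe_Ico, Set.mem_Ico, hf]
      constructor
      · intro h
        have h1 : t (w+1) ≤ (j:ℤ) := (hmv j (w+1)).mp (by omega)
        have h2 : (j:ℤ) < t w := by
          by_contra hc
          push_neg at hc
          have := (hmv j w).mpr hc
          omega
        exact ⟨Int.toNat_le.mpr h1, Int.lt_toNat.mpr h2⟩
      · rintro ⟨h1, h2⟩
        have h1' : t (w+1) ≤ (j:ℤ) := Int.toNat_le.mp h1
        have h2' : (j:ℤ) < t w := Int.lt_toNat.mp h2
        have hle : m j ≤ w + 1 := (hmv j (w+1)).mpr h1'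
        have hnle : ¬ m j ≤ w := by
          intro hc
          have := (hmv j w).mp hc
          omega
        omega
    rw [hset, Set.ncard_coe_finset, Nat.card_Ico]
    have hg := (hstep w).2
    have h1 := Int.toNat_of_nonneg (hnn w)
    have h2 := Int.toNat_of_nonneg (hnn (w+1))
    omega
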